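/- arXiv:1408.1812 — 2 statements merged into one kernel-verified Lean document; each statement's English description precedes it below -/
import Mathlib

section
/- Let m ≥ 10 and let G = (A,B) be a bipartite digraph with |A| = m+1 and |B| = m such that δ⁰(G) ≥ (7m+2)/8. Let x, y ∈ A be distinct. Then for every orientation Q of a path on 2m+1 vertices, G contains a spanning copy of Q whose initial vertex is x and whose final vertex is y; that is, G contains a Hamilton path of any given orientation between x and y. -/
open Finset

noncomputable section

variable {n : ℕ}

def dPlus (G : Finset (Fin n × Fin n)) (X : Finset (Fin n)) (x : Fin n) : ℕ :=
  (G.filter fun e => e.1 = x ∧ e.2 ∈ X).card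

def dMinus (G : Finset (Fin n × Fin n)) (X : Finset (Fin n)) (x : Fin n) : ℕ :=
  (G.filter fun e => e.2 = x ∧ e.1 ∈ X).card

def MinSemi (G : Finset (Fin n × Fin n)) (r : ℝ) : Prop :=
  ∀ x : Fin n, r ≤ (dPlus G Finset.univ x : ℝ) ∧ r ≤ (dMinus G Finset.univ x : ℝ)

def PathEmbed (G : Finset (Fin n × Fin n)) (p : ℕ → Bool) (ℓ : ℕ) (f : ℕ → Fin n) : Prop :=
  Set.InjOn f (Set.Iic ℓ) ∧
    ∀ i < ℓ, if p i then (f i, f (i + 1)) ∈ G else (f (i + 1), f i) ∈ G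

/-!
List `A` as `x = a₀, a₁, …, a_m = y` in any order. A Hamilton path of the prescribed
orientation from `x` to `y` then amounts to a bijection from the `m` slots to `B` that puts into
slot `k` a vertex joined to `a_k` and `a_{k+1}` in the prescribed directions, and by Hall's theorem
it suffices that any `s` slots admit at least `s` vertices between them. Each slot admits at least
`(6m+4)/8` vertices, as the two relevant neighbourhoods are subsets of `B` of size at least
`(7m+2)/8`; this settles `8s ≤ 6m+4`. Each `b ∈ B` is joined in both directions to all but at
most `(m+6)/4` vertices of `A`, so it is admissible for all but at most `(m+6)/2` slots, and for
`m ≥ 10` any `s > (6m+4)/8` slots include one of those.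
-/

def Arc (G : Finset (Fin n × Fin n)) (d : Bool) (u v : Fin n) : Prop :=
  if d then (u, v) ∈ G else (v, u) ∈ G

instance (G : Finset (Fin n × Fin n)) (d : Bool) (u v : Fin n) : Decidable (Arc G d u v) := by
  unfold Arc; infer_instance

def arcNbrs (G : Finset (Fin n × Fin n)) (d : Bool) (u : Fin n) : Finset (Fin n) :=
  univ.filter (Arc G d u)

def IsBipartite (G : Finset (Fin n × Fin n)) (A B : Finset (Fin n)) : Prop :=
  ∀ e ∈ G, (e.1 ∈ A ∧ e.2 ∈ B) ∨ (e.1 ∈ B ∧ e.2 ∈ A)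

section Arcs

variable {G : Finset (Fin n × Fin n)}

theorem arc_not {d : Bool} {u v : Fin n} : Arc G (!d) u v ↔ Arc G d v u := by
  cases d <;> rfl

@[simp]
theorem mem_arcNbrs {d : Bool} {u v : Fin n} : v ∈ arcNbrs G d u ↔ Arc G d u v := by
  simp [arcNbrs]

theorem card_arcNbrs_true (u : Fin n) : #(arcNbrs G true u) = dPlus G univ u := by
  refine card_nbij' (Prod.mk u) Prod.snd ?_ ?_ ?_ ?_ <;>
    rintro ⟨⟩ <;> simp [arcNbrs, Arc] <;> grind

theorem card_arcNbrs_false (u : Fin n) : #(arcNbrs G false u) = dMinus G univ u := by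
  refine card_nbij' (Prod.mk · u) Prod.fst ?_ ?_ ?_ ?_ <;>
    rintro ⟨⟩ <;> simp [arcNbrs, Arc] <;> grind

theorem MinSemi.le_card_arcNbrs {r : ℝ} (h : MinSemi G r) (d : Bool) (u : Fin n) :
    r ≤ #(arcNbrs G d u) := by
  cases d
  · simpa [card_arcNbrs_false] using (h u).2
  · simpa [card_arcNbrs_true] using (h u).1

theorem IsBipartite.symm {A B : Finset (Fin n)} (h : IsBipartite G A B) : IsBipartite G B A :=
  fun e he => (h e he).symm

theorem IsBipartite.arcNbrs_subset {A B : Finset (Fin n)} (h : IsBipartite G A B)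
    (hAB : Disjoint A B) {u : Fin n} (hu : u ∈ A) (d : Bool) : arcNbrs G d u ⊆ B := by
  intro v hv
  have hu' : u ∉ B := disjoint_left.mp hAB hu
  cases d <;> simp only [mem_arcNbrs, Arc] at hv <;> rcases h _ hv with h | h <;>
    simp_all

end Arcs

theorem exists_injOn_Iic_of_card_eq {α : Type*} {s : Finset α} {m : ℕ} (hs : #s = m + 1)
    {x y : α} (hx : x ∈ s) (hy : y ∈ s) (hxy : x ≠ y) :
    ∃ a : ℕ → α, a 0 = x ∧ a m = y ∧ Set.InjOn a (Set.Iic m) ∧ ∀ k ≤ m, a k ∈ s := by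
  classical
  obtain ⟨L, hLnodup, hLmem, hLlen⟩ : ∃ L : List α, L.Nodup ∧
      (∀ z, z ∈ L ↔ z ≠ y ∧ z ≠ x ∧ z ∈ s) ∧ L.length + 1 = m := by
    refine ⟨((s.erase x).erase y).toList, nodup_toList _, by simp, ?_⟩
    have := one_lt_card.mpr ⟨x, hx, y, hy, hxy⟩
    simp [card_erase_of_mem, hx, hy, hxy.symm, hs]
    omega
  set l := x :: (L ++ [y]) with hl
  have hnodup : l.Nodup := by
    simp +contextual [hl, List.nodup_append, hxy, hLnodup, hLmem]
  have hls : ∀ z ∈ l, z ∈ s := by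
    simp +contextual [hl, or_imp, hx, hy, hLmem]
  have hget (k : ℕ) (hk : k ≤ m) : l.getD k x = l[k]'(by simp [hl]; omega) :=
    List.getD_eq_getElem _ _ _
  refine ⟨fun k => l.getD k x, rfl, ?_, ?_, ?_⟩
  · simp [hl, ← hLlen]
  · intro k hk k' hk' h
    simp only [Set.mem_Iic] at hk hk' h
    rwa [hget k hk, hget k' hk', hnodup.getElem_inj_iff] at h
  · intro k hk
    simp only [hget k hk]
    exact hls _ (List.getElem_mem _)

def interleave {α : Type*} (a b : ℕ → α) (j : ℕ) : α :=
  if j % 2 = 0 then a (j / 2) else b (j / 2)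

section Interleave

variable {α : Type*} {a b : ℕ → α}

@[simp]
theorem interleave_two_mul (k : ℕ) : interleave a b (2 * k) = a k := by
  simp [interleave]

@[simp]
theorem interleave_two_mul_add_one (k : ℕ) : interleave a b (2 * k + 1) = b k := by
  simp [interleave, Nat.add_mod, Nat.add_div]

theorem injOn_interleave {m : ℕ} {A B : Set α} (hAB : Disjoint A B) (ha : Set.InjOn a (Set.Iic m))
    (haA : Set.MapsTo a (Set.Iic m) A) (hb : Set.InjOn b (Set.Iio m))
    (hbB : Set.MapsTo b (Set.Iio m) B) :
    Set.InjOn (interleave a b) (Set.Iic (2 * m)) := by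
  intro i hi j hj h
  simp only [Set.mem_Iic] at hi hj
  obtain ⟨k, rfl | rfl⟩ := Nat.even_or_odd' i <;> obtain ⟨l, rfl | rfl⟩ := Nat.even_or_odd' j <;>
    simp only [interleave_two_mul, interleave_two_mul_add_one] at h
  · rw [ha (by simp; omega) (by simp; omega) h]
  · exact absurd h (hAB.ne_of_mem (haA (by simp; omega)) (hbB (by simp; omega)))
  · exact absurd h.symm (hAB.ne_of_mem (haA (by simp; omega)) (hbB (by simp; omega)))
  · rw [hb (by simp; omega) (by simp; omega) h]

end Interleave

theorem PathEmbed.surjective {G : Finset (Fin n × Fin n)} {p : ℕ → Bool} {ℓ : ℕ} {f : ℕ → Fin n}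
    (hf : PathEmbed G p ℓ f) (hn : n = ℓ + 1) (v : Fin n) : ∃ i ≤ ℓ, f i = v := by
  have hsurj := Finset.surjOn_of_injOn_of_card_le f (s := Finset.Iic ℓ) (t := univ)
    (fun _ _ => mem_coe.2 (mem_univ _)) (by simpa using hf.1) (by simp [hn])
  obtain ⟨i, hi, rfl⟩ := hsurj (mem_univ v)
  exact ⟨i, by simpa using hi, rfl⟩

theorem pathEmbed_interleave {G : Finset (Fin n × Fin n)} {p : ℕ → Bool} {m : ℕ}
    {a b : ℕ → Fin n} (hinj : Set.InjOn (interleave a b) (Set.Iic (2 * m)))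
    (harc : ∀ k < m, Arc G (p (2 * k)) (a k) (b k) ∧ Arc G (p (2 * k + 1)) (b k) (a (k + 1))) :
    PathEmbed G p (2 * m) (interleave a b) := by
  refine ⟨hinj, fun i hi => ?_⟩
  change Arc G (p i) (interleave a b i) (interleave a b (i + 1))
  obtain ⟨k, rfl | rfl⟩ := Nat.even_or_odd' i
  · simpa using (harc k (by omega)).1
  · simpa [show 2 * k + 1 + 1 = 2 * (k + 1) by ring] using (harc k (by omega)).2

theorem card_add_card_le_card_inter_add_card {α : Type*} [DecidableEq α] {s t u : Finset α}
    (hs : s ⊆ u) (ht : t ⊆ u) : #s + #t ≤ #(s ∩ t) + #u := by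
  rw [← card_union_add_card_inter, add_comm]
  gcongr
  exact union_subset hs ht

theorem card_filter_notMem_le {ι α : Type*} [DecidableEq α] {s : Finset ι} {g : ι → α}
    {A : Finset α} (T : Finset α) (hg : Set.InjOn g s) (hgA : ∀ i ∈ s, g i ∈ A) :
    #{i ∈ s | g i ∉ T} ≤ #(A \ T) :=
  card_le_card_of_injOn g (fun i hi => by simp_all) (hg.mono (coe_subset.2 (filter_subset _ _)))

theorem le_card_filter_mem_and_mem {α : Type*} [DecidableEq α] {a : ℕ → α} {m : ℕ}
    {A : Finset α} (T : Finset α) (ha : Set.InjOn a (Set.Iic m)) (haA : ∀ k ≤ m, a k ∈ A) :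
    m ≤ #{i : Fin m | a i ∈ T ∧ a (i + 1) ∈ T} + 2 * #(A \ T) := by
  have hbad : univ.filter (fun i : Fin m => ¬(a i ∈ T ∧ a (i + 1) ∈ T)) ⊆
      univ.filter (fun i : Fin m => a i ∉ T) ∪ univ.filter (fun i : Fin m => a (i + 1) ∉ T) := by
    intro i; simp only [mem_filter, mem_union, mem_univ, true_and]; tauto
  have h0 := card_filter_notMem_le (s := univ) (g := fun i : Fin m => a i) T
    (fun i _ j _ h => Fin.ext (ha (by simp [i.2.le]) (by simp [j.2.le]) h))
    (fun i _ => haA i (by omega))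
  have h1 := card_filter_notMem_le (s := univ) (g := fun i : Fin m => a (i + 1)) T
    (fun i _ j _ h => Fin.ext (by simpa using ha (by simp [i.2]) (by simp [j.2]) h))
    (fun i _ => haA _ (by omega))
  have := card_filter_add_card_filter_not (s := (univ : Finset (Fin m)))
    (fun i : Fin m => a i ∈ T ∧ a (i + 1) ∈ T)
  have := (card_le_card hbad).trans (card_union_le _ _)
  simp only [card_univ, Fintype.card_fin] at *
  omega

def slotNbrs (G : Finset (Fin n × Fin n)) (p : ℕ → Bool) (a : ℕ → Fin n) (k : ℕ) :
    Finset (Fin n) :=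
  arcNbrs G (p (2 * k)) (a k) ∩ arcNbrs G (!p (2 * k + 1)) (a (k + 1))

def bothNbrs (G : Finset (Fin n × Fin n)) (v : Fin n) : Finset (Fin n) :=
  arcNbrs G true v ∩ arcNbrs G false v

section Slots

variable {G : Finset (Fin n × Fin n)} {A B : Finset (Fin n)} {m : ℕ} {p : ℕ → Bool}
  {a : ℕ → Fin n}

theorem mem_slotNbrs {k : ℕ} {v : Fin n} :
    v ∈ slotNbrs G p a k ↔ Arc G (p (2 * k)) (a k) v ∧ Arc G (p (2 * k + 1)) v (a (k + 1)) := by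
  simp [slotNbrs, arc_not]

theorem arc_of_mem_bothNbrs {u v : Fin n} (h : u ∈ bothNbrs G v) (d : Bool) : Arc G d u v := by
  simp only [bothNbrs, mem_inter, mem_arcNbrs] at h
  cases d
  · exact h.1
  · exact h.2

theorem mem_slotNbrs_of_mem_bothNbrs {k : ℕ} {v : Fin n} (h₀ : a k ∈ bothNbrs G v)
    (h₁ : a (k + 1) ∈ bothNbrs G v) : v ∈ slotNbrs G p a k :=
  mem_slotNbrs.2 ⟨arc_of_mem_bothNbrs h₀ _, arc_not.1 (arc_of_mem_bothNbrs h₁ _)⟩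

theorem IsBipartite.slotNbrs_subset (hbip : IsBipartite G A B) (hAB : Disjoint A B) {k : ℕ}
    (hk : a k ∈ A) : slotNbrs G p a k ⊆ B :=
  inter_subset_left.trans (hbip.arcNbrs_subset hAB hk _)

theorem IsBipartite.card_slotNbrs (hbip : IsBipartite G A B) (hAB : Disjoint A B) (hB : #B = m)
    (hdeg : ∀ d u, 7 * m + 2 ≤ 8 * #(arcNbrs G d u)) {k : ℕ} (hk : a k ∈ A)
    (hk' : a (k + 1) ∈ A) : 6 * m + 4 ≤ 8 * #(slotNbrs G p a k) := by
  have := card_add_card_le_card_inter_add_card (hbip.arcNbrs_subset hAB hk (p (2 * k)))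
    (hbip.arcNbrs_subset hAB hk' (!p (2 * k + 1)))
  have := hdeg (p (2 * k)) (a k)
  have := hdeg (!p (2 * k + 1)) (a (k + 1))
  rw [slotNbrs]
  omega

theorem IsBipartite.card_bothNbrs (hbip : IsBipartite G A B) (hAB : Disjoint A B)
    (hA : #A = m + 1) (hdeg : ∀ d u, 7 * m + 2 ≤ 8 * #(arcNbrs G d u)) {v : Fin n} (hv : v ∈ B) :
    6 * m ≤ 8 * #(bothNbrs G v) + 4 := by
  have := card_add_card_le_card_inter_add_card (hbip.symm.arcNbrs_subset hAB.symm hv true)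
    (hbip.symm.arcNbrs_subset hAB.symm hv false)
  have := hdeg true v
  have := hdeg false v
  rw [bothNbrs]
  omega

theorem IsBipartite.card_le_card_biUnion_slotNbrs (hbip : IsBipartite G A B)
    (hAB : Disjoint A B) (hm : 10 ≤ m) (hA : #A = m + 1) (hB : #B = m)
    (hdeg : ∀ d u, 7 * m + 2 ≤ 8 * #(arcNbrs G d u)) (ha : Set.InjOn a (Set.Iic m))
    (haA : ∀ k ≤ m, a k ∈ A) (I : Finset (Fin m)) :
    #I ≤ #(I.biUnion fun i => slotNbrs G p a i) := by
  by_cases hI : 8 * #I ≤ 6 * m + 4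
  · obtain rfl | ⟨i, hi⟩ := I.eq_empty_or_nonempty
    · simp
    have := hbip.card_slotNbrs (p := p) hAB hB hdeg (haA i (by omega)) (haA (i + 1) (by omega))
    calc #I ≤ #(slotNbrs G p a i) := by omega
      _ ≤ _ := card_le_card (subset_biUnion_of_mem (fun i : Fin m => slotNbrs G p a i) hi)
  calc #I ≤ #B := by simpa [hB] using card_le_univ I
    _ ≤ _ := card_le_card fun v hv => ?_
  have hsub : bothNbrs G v ⊆ A :=
    inter_subset_left.trans (hbip.symm.arcNbrs_subset hAB.symm hv true)
  have hgood := le_card_filter_mem_and_mem (bothNbrs G v) ha haA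
  have hboth := hbip.card_bothNbrs hAB hA hdeg hv
  rw [card_sdiff_of_subset hsub, hA] at hgood
  obtain ⟨i, hi⟩ := inter_nonempty_of_card_lt_card_add_card (subset_univ I)
    (subset_univ {i : Fin m | a i ∈ bothNbrs G v ∧ a (i + 1) ∈ bothNbrs G v})
    (by simp only [card_univ, Fintype.card_fin]; omega)
  simp only [mem_inter, mem_filter, mem_univ, true_and] at hi
  exact mem_biUnion.2 ⟨i, hi.1, mem_slotNbrs_of_mem_bothNbrs hi.2.1 hi.2.2⟩

theorem IsBipartite.exists_injOn_mem_slotNbrs (hbip : IsBipartite G A B)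
    (hAB : Disjoint A B) (hm : 10 ≤ m) (hA : #A = m + 1) (hB : #B = m)
    (hdeg : ∀ d u, 7 * m + 2 ≤ 8 * #(arcNbrs G d u)) (ha : Set.InjOn a (Set.Iic m))
    (haA : ∀ k ≤ m, a k ∈ A) (p : ℕ → Bool) :
    ∃ b : ℕ → Fin n, Set.InjOn b (Set.Iio m) ∧ ∀ k < m, b k ∈ slotNbrs G p a k := by
  obtain ⟨β, hβ, hβS⟩ := (all_card_le_biUnion_card_iff_exists_injective _).1
    (hbip.card_le_card_biUnion_slotNbrs (p := p) hAB hm hA hB hdeg ha haA)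
  refine ⟨fun k => if h : k < m then β ⟨k, h⟩ else a 0, fun k hk l hl h => ?_, fun k hk => ?_⟩
  · simp only [Set.mem_Iio] at hk hl
    exact Fin.mk.inj_iff.1 (hβ (by simpa [hk, hl] using h))
  · simpa [hk] using hβS ⟨k, hk⟩

end Slots

theorem stmt_2_general (m : ℕ) (hm : 10 ≤ m)
    (G : Finset (Fin (2 * m + 1) × Fin (2 * m + 1)))
    (A B : Finset (Fin (2 * m + 1)))
    (hdisj : Disjoint A B)
    (hA : A.card = m + 1) (hB : B.card = m)
    (hbip : ∀ e ∈ G, (e.1 ∈ A ∧ e.2 ∈ B) ∨ (e.1 ∈ B ∧ e.2 ∈ A))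
    (hdeg : MinSemi G ((7 * m + 2 : ℝ) / 8))
    (x y : Fin (2 * m + 1)) (hx : x ∈ A) (hy : y ∈ A) (hxy : x ≠ y)
    (p : ℕ → Bool) :
    ∃ f : ℕ → Fin (2 * m + 1), PathEmbed G p (2 * m) f ∧
      (∀ v : Fin (2 * m + 1), ∃ i ≤ 2 * m, f i = v) ∧
      f 0 = x ∧ f (2 * m) = y := by
  have hbip : IsBipartite G A B := hbip
  have hdeg' (d : Bool) (u : Fin (2 * m + 1)) : 7 * m + 2 ≤ 8 * #(arcNbrs G d u) := by
    have := hdeg.le_card_arcNbrs d u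
    rw [div_le_iff₀ (by norm_num)] at this
    exact_mod_cast (by linarith : (7 * m + 2 : ℝ) ≤ 8 * #(arcNbrs G d u))
  obtain ⟨a, ha0, ham, ha, haA⟩ := exists_injOn_Iic_of_card_eq hA hx hy hxy
  obtain ⟨b, hb, hbS⟩ := hbip.exists_injOn_mem_slotNbrs hdisj hm hA hB hdeg' ha haA p
  have hinj := injOn_interleave (disjoint_coe.2 hdisj) ha (fun k hk => haA k hk) hb
    (fun k hk => hbip.slotNbrs_subset hdisj (haA k (le_of_lt hk)) (hbS k hk))
  have hf := pathEmbed_interleave hinj fun k hk => mem_slotNbrs.1 (hbS k hk)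
  exact ⟨_, hf, hf.surjective (by ring), by simpa [interleave] using ha0, by simpa using ham⟩

/-- let `m ≥ 10` and let `G` be a bipartite digraph with vertex classes `A`, `B`
of sizes `m+1` and `m` and minimum semidegree at least `(7m+2)/8`. Then between any two
distinct vertices `x, y ∈ A` there is a Hamilton path of any given orientation. -/
theorem stmt_2 (m : ℕ) (hm : 10 ≤ m)
    (G : Finset (Fin (2 * m + 1) × Fin (2 * m + 1)))
    (A B : Finset (Fin (2 * m + 1)))
    (hpart : A ∪ B = Finset.univ) (hdisj : Disjoint A B)
    (hA : A.card = m + 1) (hB : B.card = m)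
    (hbip : ∀ e ∈ G, (e.1 ∈ A ∧ e.2 ∈ B) ∨ (e.1 ∈ B ∧ e.2 ∈ A))
    (hdeg : MinSemi G ((7 * m + 2 : ℝ) / 8))
    (x y : Fin (2 * m + 1)) (hx : x ∈ A) (hy : y ∈ A) (hxy : x ≠ y)
    (p : ℕ → Bool) :
    ∃ f : ℕ → Fin (2 * m + 1), PathEmbed G p (2 * m) f ∧
      (∀ v : Fin (2 * m + 1), ∃ i ≤ 2 * m, f i = v) ∧
      f 0 = x ∧ f (2 * m) = y :=
  stmt_2_general m hm G A B hdisj hA hB hbip hdeg x y hx hy hxy p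
end
end

section
/- Suppose the constants satisfy the hierarchy 1/n ≪ ε₃ ≪ ε₄ ≪ η₂ ≪ 1. Let G be a digraph on n vertices with δ⁰(G) ≥ n/2 and suppose A, B, S, T is a partition of V(G) satisfying (P0)–(P7), with |A| = a and |B| = b. Then: (i) if a = b ∈ {0,1}, then for any prescribed directions (each either from S to T or from T to S), G contains two disjoint edges between S and T realizing the prescribed directions; (ii) if A = ∅, then G contains two disjoint TS-edges; (iii) if a = 1 and b ≥ 2, then G contains two disjoint TS-edges; (iv) G contains two disjoint edges in E(S, T∪A) ∪ E(T, S∪B). -/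
open Finset

open scoped Classical

noncomputable section

variable {n : ℕ}

/-- `A, B, S, T` is a partition of the vertex set. -/
def Partition4 (A B S T : Finset (Fin n)) : Prop :=
  A ∪ B ∪ S ∪ T = Finset.univ ∧ Disjoint A B ∧ Disjoint A S ∧ Disjoint A T ∧
    Disjoint B S ∧ Disjoint B T ∧ Disjoint S T

/-- Property (P0): `a ≤ b` and `s ≤ t`. -/
def P0 (A B S T : Finset (Fin n)) : Prop := A.card ≤ B.card ∧ S.card ≤ T.card

/-- Properties (P1)–(P7) of an `ST`-extremal partition. -/
def Pconds (G : Finset (Fin n × Fin n)) (A B S T : Finset (Fin n)) (ε₃ η₂ : ℝ) : Prop :=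
  -- (P1)
  (((n / 2 : ℕ) : ℝ) - ε₃ * n ≤ (S.card : ℝ) ∧
    (S.card : ℝ) ≤ (((n + 1) / 2 : ℕ) : ℝ) + ε₃ * n ∧
    ((n / 2 : ℕ) : ℝ) - ε₃ * n ≤ (T.card : ℝ) ∧
    (T.card : ℝ) ≤ (((n + 1) / 2 : ℕ) : ℝ) + ε₃ * n) ∧
  -- (P2)
  ((∀ x ∈ S, η₂ * n ≤ (dPlus G S x : ℝ) ∧ η₂ * n ≤ (dMinus G S x : ℝ)) ∧
    (∀ x ∈ T, η₂ * n ≤ (dPlus G T x : ℝ) ∧ η₂ * n ≤ (dMinus G T x : ℝ))) ∧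
  -- (P3)
  (((S.filter fun x => ¬((n : ℝ) / 2 - ε₃ * n ≤ (dPlus G S x : ℝ) ∧
      (n : ℝ) / 2 - ε₃ * n ≤ (dMinus G S x : ℝ))).card : ℝ) ≤ ε₃ * n) ∧
  -- (P4)
  (((T.filter fun x => ¬((n : ℝ) / 2 - ε₃ * n ≤ (dPlus G T x : ℝ) ∧
      (n : ℝ) / 2 - ε₃ * n ≤ (dMinus G T x : ℝ))).card : ℝ) ≤ ε₃ * n) ∧
  -- (P5)
  ((A.card : ℝ) + (B.card : ℝ) ≤ ε₃ * n) ∧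
  -- (P6)
  (∀ x ∈ A, (n : ℝ) / 2 - 3 * η₂ * n < (dMinus G T x : ℝ) ∧
    (n : ℝ) / 2 - 3 * η₂ * n < (dPlus G S x : ℝ) ∧
    (dMinus G S x : ℝ) ≤ 3 * η₂ * n ∧ (dPlus G T x : ℝ) ≤ 3 * η₂ * n) ∧
  -- (P7)
  (∀ x ∈ B, (n : ℝ) / 2 - 3 * η₂ * n < (dMinus G S x : ℝ) ∧
    (n : ℝ) / 2 - 3 * η₂ * n < (dPlus G T x : ℝ) ∧
    (dMinus G T x : ℝ) ≤ 3 * η₂ * n ∧ (dPlus G S x : ℝ) ≤ 3 * η₂ * n)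

/-- Two edges are disjoint if they share no endvertex. -/
def EdgeDisj (e f : Fin n × Fin n) : Prop :=
  e.1 ≠ f.1 ∧ e.1 ≠ f.2 ∧ e.2 ≠ f.1 ∧ e.2 ≠ f.2

section lemmas
variable {G : Finset (Fin n × Fin n)} {X Y : Finset (Fin n)} {x y : Fin n}

lemma dPlus_eq (G : Finset (Fin n × Fin n)) (X : Finset (Fin n)) (x : Fin n) :
    dPlus G X x = (X.filter fun y => (x, y) ∈ G).card := by
  classical
  refine Finset.card_bij (fun e _ => e.2) ?_ ?_ ?_
  · rintro e he
    simp only [mem_filter] at he ⊢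
    obtain ⟨hg, h1, h2⟩ := he
    refine ⟨h2, ?_⟩
    have : e = (x, e.2) := by rw [← h1]
    rwa [← this]
  · rintro e he f hf h
    simp only [mem_filter] at he hf
    exact Prod.ext (he.2.1.trans hf.2.1.symm) h
  · rintro y hy
    simp only [mem_filter] at hy
    exact ⟨(x, y), by simp [hy.1, hy.2], rfl⟩

lemma dMinus_eq (G : Finset (Fin n × Fin n)) (X : Finset (Fin n)) (x : Fin n) :
    dMinus G X x = (X.filter fun y => (y, x) ∈ G).card := by
  classical
  refine Finset.card_bij (fun e _ => e.1) ?_ ?_ ?_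
  · rintro e he
    simp only [mem_filter] at he ⊢
    obtain ⟨hg, h1, h2⟩ := he
    refine ⟨h2, ?_⟩
    have : e = (e.1, x) := by rw [← h1]
    rwa [← this]
  · rintro e he f hf h
    simp only [mem_filter] at he hf
    exact Prod.ext h (he.2.1.trans hf.2.1.symm)
  · rintro y hy
    simp only [mem_filter] at hy
    exact ⟨(y, x), by simp [hy.1, hy.2], rfl⟩

lemma dPlus_le_card : dPlus G X x ≤ X.card := by
  rw [dPlus_eq]; exact card_filter_le _ _

lemma dMinus_le_card : dMinus G X x ≤ X.card := by
  rw [dMinus_eq]; exact card_filter_le _ _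

lemma dPlus_add_one_le (hG : ∀ e ∈ G, e.1 ≠ e.2) (hx : x ∈ X) :
    dPlus G X x + 1 ≤ X.card := by
  rw [dPlus_eq]
  have hsub : (X.filter fun y => (x, y) ∈ G) ⊆ X.erase x := by
    intro y hy
    simp only [mem_filter] at hy
    exact mem_erase.2 ⟨fun h => hG _ hy.2 (by simp [h]), hy.1⟩
  calc (X.filter fun y => (x, y) ∈ G).card + 1 ≤ (X.erase x).card + 1 :=
        Nat.add_le_add_right (card_le_card hsub) 1
    _ = X.card := by
        have h1 : 0 < X.card := card_pos.2 ⟨x, hx⟩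
        rw [card_erase_of_mem hx]; omega

lemma dMinus_add_one_le (hG : ∀ e ∈ G, e.1 ≠ e.2) (hx : x ∈ X) :
    dMinus G X x + 1 ≤ X.card := by
  rw [dMinus_eq]
  have hsub : (X.filter fun y => (y, x) ∈ G) ⊆ X.erase x := by
    intro y hy
    simp only [mem_filter] at hy
    exact mem_erase.2 ⟨fun h => hG _ hy.2 (by simp [h]), hy.1⟩
  calc (X.filter fun y => (y, x) ∈ G).card + 1 ≤ (X.erase x).card + 1 :=
        Nat.add_le_add_right (card_le_card hsub) 1
    _ = X.card := by
        have h1 : 0 < X.card := card_pos.2 ⟨x, hx⟩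
        rw [card_erase_of_mem hx]; omega

lemma exists_out (h : 0 < dPlus G X x) : ∃ y ∈ X, (x, y) ∈ G := by
  rw [dPlus_eq] at h
  obtain ⟨y, hy⟩ := card_pos.1 h
  simp only [mem_filter] at hy
  exact ⟨y, hy.1, hy.2⟩

lemma exists_in (h : 0 < dMinus G X x) : ∃ y ∈ X, (y, x) ∈ G := by
  rw [dMinus_eq] at h
  obtain ⟨y, hy⟩ := card_pos.1 h
  simp only [mem_filter] at hy
  exact ⟨y, hy.1, hy.2⟩

lemma exists_out_ne (h : 2 ≤ dPlus G X x) (w : Fin n) : ∃ y ∈ X, y ≠ w ∧ (x, y) ∈ G := by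
  rw [dPlus_eq] at h
  have : 0 < ((X.filter fun y => (x, y) ∈ G).erase w).card := by
    by_cases hw : w ∈ X.filter fun y => (x, y) ∈ G
    · rw [card_erase_of_mem hw]; omega
    · rw [erase_eq_of_notMem hw]; omega
  obtain ⟨y, hy⟩ := card_pos.1 this
  simp only [mem_erase, mem_filter] at hy
  exact ⟨y, hy.2.1, hy.1, hy.2.2⟩

lemma dPlus_union (h : Disjoint X Y) :
    dPlus G (X ∪ Y) x = dPlus G X x + dPlus G Y x := by
  rw [dPlus_eq, dPlus_eq, dPlus_eq, filter_union,
    card_union_of_disjoint (disjoint_filter_filter h)]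

lemma dMinus_union (h : Disjoint X Y) :
    dMinus G (X ∪ Y) x = dMinus G X x + dMinus G Y x := by
  rw [dMinus_eq, dMinus_eq, dMinus_eq, filter_union,
    card_union_of_disjoint (disjoint_filter_filter h)]

lemma dPlus_le_one_of_cov (hcov : ∀ z ∈ X, (x, z) ∈ G → z = y) : dPlus G X x ≤ 1 := by
  rw [dPlus_eq]
  refine card_le_one.2 ?_
  intro a ha b hb
  simp only [mem_filter] at ha hb
  rw [hcov a ha.1 ha.2, hcov b hb.1 hb.2]

lemma dMinus_le_one_of_cov (hcov : ∀ z ∈ X, (z, x) ∈ G → z = y) : dMinus G X x ≤ 1 := by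
  rw [dMinus_eq]
  refine card_le_one.2 ?_
  intro a ha b hb
  simp only [mem_filter] at ha hb
  rw [hcov a ha.1 ha.2, hcov b hb.1 hb.2]

lemma dPlus_eq_zero_of (h : ∀ z ∈ X, (x, z) ∉ G) : dPlus G X x = 0 := by
  rw [dPlus_eq, card_eq_zero, filter_eq_empty_iff]; exact h

lemma dMinus_eq_zero_of (h : ∀ z ∈ X, (z, x) ∉ G) : dMinus G X x = 0 := by
  rw [dMinus_eq, card_eq_zero, filter_eq_empty_iff]; exact h

lemma sum_dMinus_eq (G : Finset (Fin n × Fin n)) (S B : Finset (Fin n)) :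
    ∑ x ∈ S, dMinus G B x = ∑ w ∈ B, dPlus G S w := by
  classical
  simp only [dMinus_eq, dPlus_eq, card_filter]
  exact Finset.sum_comm

end lemmas

set_option maxHeartbeats 4000000 in
/-- disjoint edges between `S` and `T` in an `ST`-extremal partition:
(i) if `a = b ∈ {0,1}` there are two disjoint edges between `S` and `T` of any given
directions; (ii) if `A = ∅` there are two disjoint `TS`-edges; (iii) if `a = 1` and
`b ≥ 2` there are two disjoint `TS`-edges; (iv) there are two disjoint edges in
`E(S, T∪A) ∪ E(T, S∪B)`. -/
theorem stmt_7 :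
    ∃ ηmax : ℝ, 0 < ηmax ∧ ∀ η : ℝ, 0 < η → η ≤ ηmax →
    ∃ ε₄max : ℝ, 0 < ε₄max ∧ ∀ ε₄ : ℝ, 0 < ε₄ → ε₄ ≤ ε₄max →
    ∃ ε₃max : ℝ, 0 < ε₃max ∧ ∀ ε₃ : ℝ, 0 < ε₃ → ε₃ ≤ ε₃max →
    ∃ n₀ : ℕ, ∀ n : ℕ, n₀ ≤ n →
    ∀ G : Finset (Fin n × Fin n), (∀ e ∈ G, e.1 ≠ e.2) →
      MinSemi G ((n : ℝ) / 2) →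
      ∀ A B S T : Finset (Fin n), Partition4 A B S T → P0 A B S T →
        Pconds G A B S T ε₃ η →
      -- (i)
      ((A.card = B.card → A.card ≤ 1 →
        ∀ d₁ d₂ : Bool,
          ∃ e₁ ∈ G, ∃ e₂ ∈ G,
            (if d₁ then e₁.1 ∈ S ∧ e₁.2 ∈ T else e₁.1 ∈ T ∧ e₁.2 ∈ S) ∧
            (if d₂ then e₂.1 ∈ S ∧ e₂.2 ∈ T else e₂.1 ∈ T ∧ e₂.2 ∈ S) ∧
            EdgeDisj e₁ e₂) ∧
      -- (ii)
      (A = ∅ →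
        ∃ e₁ ∈ G, ∃ e₂ ∈ G, (e₁.1 ∈ T ∧ e₁.2 ∈ S) ∧ (e₂.1 ∈ T ∧ e₂.2 ∈ S) ∧
          EdgeDisj e₁ e₂) ∧
      -- (iii)
      (A.card = 1 → 2 ≤ B.card →
        ∃ e₁ ∈ G, ∃ e₂ ∈ G, (e₁.1 ∈ T ∧ e₁.2 ∈ S) ∧ (e₂.1 ∈ T ∧ e₂.2 ∈ S) ∧
          EdgeDisj e₁ e₂) ∧
      -- (iv)
      (∃ e₁ ∈ G, ∃ e₂ ∈ G,
        ((e₁.1 ∈ S ∧ e₁.2 ∈ T ∪ A) ∨ (e₁.1 ∈ T ∧ e₁.2 ∈ S ∪ B)) ∧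
        ((e₂.1 ∈ S ∧ e₂.2 ∈ T ∪ A) ∨ (e₂.1 ∈ T ∧ e₂.2 ∈ S ∪ B)) ∧
        EdgeDisj e₁ e₂)) := by
  refine ⟨1/100, by norm_num, fun η hη hη' => ⟨η, hη, fun ε₄ hε₄ hε₄' =>
    ⟨ε₄, hε₄, fun ε₃ hε₃ hε₃' => ⟨1000, fun n hn G hG hsemi A B S T hpart hP0 hP => ?_⟩⟩⟩⟩
  obtain ⟨hcover, dAB, dAS, dAT, dBS, dBT, dST⟩ := hpart
  obtain ⟨hP1, hP2, hP3, hP4, hP5, hP6, hP7⟩ := hP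
  obtain ⟨hab, hst⟩ := hP0
  have hε₃η : ε₃ ≤ η := le_trans hε₃' hε₄'
  have hnR : (1000 : ℝ) ≤ (n : ℝ) := by exact_mod_cast hn
  have hε₃n : ε₃ * n ≤ (n : ℝ) / 100 := by nlinarith
  have hηn : η * n ≤ (n : ℝ) / 100 := by nlinarith
  have hηpos : 0 ≤ η * n := by positivity
  -- cardinality of partition
  have hDabS : Disjoint (A ∪ B) S := disjoint_union_left.2 ⟨dAS, dBS⟩
  have hDabsT : Disjoint (A ∪ B ∪ S) T :=
    disjoint_union_left.2 ⟨disjoint_union_left.2 ⟨dAT, dBT⟩, dST⟩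
  have hcard : A.card + B.card + S.card + T.card = n := by
    have h1 : (A ∪ B ∪ S ∪ T).card = n := by rw [hcover, card_univ, Fintype.card_fin]
    rwa [card_union_of_disjoint hDabsT, card_union_of_disjoint hDabS,
      card_union_of_disjoint dAB] at h1
  have hcardR : (A.card : ℝ) + B.card + S.card + T.card = n := by exact_mod_cast hcard
  have hstR : (S.card : ℝ) ≤ T.card := by exact_mod_cast hst
  have habR : (A.card : ℝ) ≤ B.card := by exact_mod_cast hab
  have hfl : ((n : ℝ) - 1) / 2 ≤ ((n / 2 : ℕ) : ℝ) := by
    have h2 : n ≤ 2 * (n / 2) + 1 := by omega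
    have h2R : (n : ℝ) ≤ 2 * ((n / 2 : ℕ) : ℝ) + 1 := by exact_mod_cast h2
    linarith
  have hsl : (n : ℝ) / 2 - ε₃ * n - 1 ≤ S.card := by
    have := hP1.1; linarith
  have htl : (n : ℝ) / 2 - ε₃ * n - 1 ≤ T.card := by
    have := hP1.2.2.1; linarith
  have hslarge : (n : ℝ) * 48 / 100 ≤ S.card := by linarith
  have htlarge : (n : ℝ) * 48 / 100 ≤ T.card := by linarith
  -- degree decompositions
  have hdegP : ∀ x : Fin n, (n : ℝ) / 2 ≤
      (dPlus G A x : ℝ) + dPlus G B x + dPlus G S x + dPlus G T x := by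
    intro x
    have h1 := (hsemi x).1
    have h2 : dPlus G Finset.univ x =
        dPlus G A x + dPlus G B x + dPlus G S x + dPlus G T x := by
      rw [← hcover, dPlus_union hDabsT, dPlus_union hDabS, dPlus_union dAB]
    rw [h2] at h1
    push_cast at h1
    linarith
  have hdegM : ∀ x : Fin n, (n : ℝ) / 2 ≤
      (dMinus G A x : ℝ) + dMinus G B x + dMinus G S x + dMinus G T x := by
    intro x
    have h1 := (hsemi x).2
    have h2 : dMinus G Finset.univ x =
        dMinus G A x + dMinus G B x + dMinus G S x + dMinus G T x := by
      rw [← hcover, dMinus_union hDabsT, dMinus_union hDabS, dMinus_union dAB]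
    rw [h2] at h1
    push_cast at h1
    linarith
  have hST_ne : ∀ ⦃x⦄, x ∈ S → ∀ ⦃y⦄, y ∈ T → x ≠ y := by
    intro x hx y hy hxy
    exact (disjoint_left.mp dST hx) (hxy ▸ hy)
  have main23 : A.card ≤ 1 → (A.card = 0 ∨ 2 ≤ B.card) →
      ∃ e₁ ∈ G, ∃ e₂ ∈ G, (e₁.1 ∈ T ∧ e₁.2 ∈ S) ∧ (e₂.1 ∈ T ∧ e₂.2 ∈ S) ∧ EdgeDisj e₁ e₂ := by
    intro ha1 hor
    by_contra hcon
    push_neg at hcon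
    have ha1R : (A.card : ℝ) ≤ 1 := by exact_mod_cast ha1
    have hkey : ∀ z x z' x', z ∈ T → x ∈ S → z' ∈ T → x' ∈ S → x ≠ x' →
        (z, x) ∈ G → (z', x') ∈ G → z = z' := by
      intro z x z' x' hz hx hz' hx' hxx h1 h2
      by_contra hzz
      exact hcon (z, x) h1 (z', x') h2 ⟨hz, hx⟩ ⟨hz', hx'⟩
        ⟨hzz, (hST_ne hx' hz).symm, hST_ne hx hz', hxx⟩
    set bad := S.filter (fun x => dMinus G T x = 0) with hbaddef
    have hbadB : ∀ x ∈ bad, ((B.card : ℝ) + 1) / 2 ≤ (dMinus G B x : ℝ) := by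
      intro x hx
      rw [hbaddef, mem_filter] at hx
      obtain ⟨hxS, hx0⟩ := hx
      have h1 := hdegM x
      have h2 : (dMinus G A x : ℝ) ≤ A.card := by exact_mod_cast dMinus_le_card
      have h3 : (dMinus G S x : ℝ) + 1 ≤ S.card := by
        exact_mod_cast dMinus_add_one_le hG hxS
      rw [hx0] at h1
      push_cast at h1
      linarith
    have hsumle : ∑ x ∈ S, (dMinus G B x : ℝ) ≤ (B.card : ℝ) * (3 * η * n) := by
      have h1 : ∑ x ∈ S, dMinus G B x = ∑ w ∈ B, dPlus G S w := sum_dMinus_eq G S B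
      have h2 : ∑ w ∈ B, (dPlus G S w : ℝ) ≤ (B.card : ℝ) * (3 * η * n) := by
        calc ∑ w ∈ B, (dPlus G S w : ℝ) ≤ ∑ _w ∈ B, 3 * η * n :=
              Finset.sum_le_sum (fun w hw => (hP7 w hw).2.2.2)
          _ = (B.card : ℝ) * (3 * η * n) := by rw [Finset.sum_const, nsmul_eq_mul]
      calc ∑ x ∈ S, (dMinus G B x : ℝ) = ((∑ x ∈ S, dMinus G B x : ℕ) : ℝ) := by push_cast; rfl
        _ = ((∑ w ∈ B, dPlus G S w : ℕ) : ℝ) := by rw [h1]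
        _ = ∑ w ∈ B, (dPlus G S w : ℝ) := by push_cast; rfl
        _ ≤ _ := h2
    have hbadcard : (bad.card : ℝ) ≤ 6 * η * n := by
      have hsub : bad ⊆ S := filter_subset _ _
      have h1 : (bad.card : ℝ) * (((B.card : ℝ) + 1) / 2) ≤ ∑ x ∈ bad, (dMinus G B x : ℝ) := by
        have := Finset.card_nsmul_le_sum bad (fun x => (dMinus G B x : ℝ)) _ hbadB
        rwa [nsmul_eq_mul] at this
      have h2 : ∑ x ∈ bad, (dMinus G B x : ℝ) ≤ ∑ x ∈ S, (dMinus G B x : ℝ) :=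
        Finset.sum_le_sum_of_subset_of_nonneg hsub (fun x _ _ => by positivity)
      have hb1 : (0 : ℝ) < (B.card : ℝ) + 1 := by positivity
      nlinarith [hsumle, hηpos]
    have hgoodcard : 2 < (S \ bad).card := by
      have hsub : bad ⊆ S := filter_subset _ _
      have h2 : bad.card ≤ S.card := card_le_card hsub
      have h3 : ((S \ bad).card : ℝ) = (S.card : ℝ) - bad.card := by
        rw [card_sdiff_of_subset hsub, Nat.cast_sub h2]
      have h4 : (2 : ℝ) < ((S \ bad).card : ℝ) := by rw [h3]; linarith
      exact_mod_cast h4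
    obtain ⟨x₁, x₂, x₃, hx₁, hx₂, hx₃, h12, h13, h23⟩ := two_lt_card_iff.1 hgoodcard
    have hpos : ∀ x ∈ S \ bad, 0 < dMinus G T x := by
      intro x hx
      rw [mem_sdiff, hbaddef, mem_filter] at hx
      exact Nat.pos_of_ne_zero (fun h => hx.2 ⟨hx.1, h⟩)
    have hx₁S : x₁ ∈ S := (mem_sdiff.1 hx₁).1
    have hx₂S : x₂ ∈ S := (mem_sdiff.1 hx₂).1
    have hx₃S : x₃ ∈ S := (mem_sdiff.1 hx₃).1
    obtain ⟨z₁, hz₁T, he₁⟩ := exists_in (hpos x₁ hx₁)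
    obtain ⟨z₂, hz₂T, he₂⟩ := exists_in (hpos x₂ hx₂)
    have hz21 : z₂ = z₁ := hkey z₂ x₂ z₁ x₁ hz₂T hx₂S hz₁T hx₁S (Ne.symm h12) he₂ he₁
    have hcov : ∀ z ∈ T, ∀ x ∈ S, (z, x) ∈ G → z = z₁ := by
      intro z hz x hx hzx
      by_cases hxx : x = x₁
      · exact (hkey z x z₂ x₂ hz hx hz₂T hx₂S (by rw [hxx]; exact h12) hzx he₂).trans hz21
      · exact hkey z x z₁ x₁ hz hx hz₁T hx₁S hxx hzx he₁
    have hTle : ∀ x ∈ S, (dMinus G T x : ℝ) ≤ 1 := by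
      intro x hx
      exact_mod_cast dMinus_le_one_of_cov (y := z₁) (fun z hz h => hcov z hz x hx h)
    have hdB : ∀ x ∈ S, (n : ℝ) / 2 - A.card - S.card ≤ (dMinus G B x : ℝ) := by
      intro x hx
      have h1 := hdegM x
      have h2 : (dMinus G A x : ℝ) ≤ A.card := by exact_mod_cast dMinus_le_card
      have h3 : (dMinus G S x : ℝ) + 1 ≤ S.card := by exact_mod_cast dMinus_add_one_le hG hx
      have h4 := hTle x hx
      linarith
    rcases lt_or_ge B.card 2 with hb | hb
    · have ha0 : A.card = 0 := by
        rcases hor with h | h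
        · exact h
        · omega
      have ha0R : (A.card : ℝ) = 0 := by exact_mod_cast ha0
      rcases Nat.eq_zero_or_pos B.card with hb0 | hbpos
      · -- b = 0
        have hb0R : (B.card : ℝ) = 0 := by exact_mod_cast hb0
        have hsge : (n : ℝ) / 2 ≤ S.card := by
          have h1 := hdB x₁ hx₁S
          have h2 : (dMinus G B x₁ : ℝ) ≤ B.card := by exact_mod_cast dMinus_le_card
          linarith
        have hTcard : 1 < T.card := by
          have h5 : (1 : ℝ) < T.card := by linarith
          exact_mod_cast h5
        have hzpos : 0 < (T.erase z₁).card := by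
          have e1 : T.card - 1 ≤ (T.erase z₁).card := pred_card_le_card_erase
          omega
        obtain ⟨z, hzmem⟩ := card_pos.1 hzpos
        rw [mem_erase] at hzmem
        obtain ⟨hzne, hzT⟩ := hzmem
        have h1 := hdegP z
        have h2 : (dPlus G A z : ℝ) ≤ A.card := by exact_mod_cast dPlus_le_card
        have h3 : (dPlus G B z : ℝ) ≤ B.card := by exact_mod_cast dPlus_le_card
        have h4 : dPlus G S z = 0 :=
          dPlus_eq_zero_of (fun x hx hzx => hzne (hcov z hzT x hx hzx))
        have h5 : (dPlus G T z : ℝ) + 1 ≤ T.card := by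
          exact_mod_cast dPlus_add_one_le hG hzT
        rw [h4] at h1
        push_cast at h1
        linarith
      · -- b = 1
        obtain ⟨w, hw⟩ := card_eq_one.1 (by omega : B.card = 1)
        have hwB : w ∈ B := by rw [hw]; exact mem_singleton_self w
        have hb1R : (B.card : ℝ) = 1 := by rw [hw]; simp
        have hall : ∀ x ∈ S, (w, x) ∈ G := by
          intro x hx
          have h1 := hdB x hx
          have h2 : 0 < dMinus G B x := by
            by_contra h0
            push_neg at h0
            have h00 : dMinus G B x = 0 := by omega
            rw [h00] at h1
            push_cast at h1
            linarith
          obtain ⟨y, hyB, hyx⟩ := exists_in h2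
          rw [hw, mem_singleton] at hyB
          rwa [hyB] at hyx
        have hPSw : (S.card : ℝ) ≤ (dPlus G S w : ℝ) := by
          have h6 : S.filter (fun y => (w, y) ∈ G) = S := filter_true_of_mem hall
          have h7 : dPlus G S w = S.card := by rw [dPlus_eq, h6]
          rw [h7]
        have h8 := (hP7 w hwB).2.2.2
        linarith
    · -- b ≥ 2
      have hbR : (2 : ℝ) ≤ (B.card : ℝ) := by exact_mod_cast hb
      have h1 : (S.card : ℝ) * (((B.card : ℝ) - 1) / 2) ≤ ∑ x ∈ S, (dMinus G B x : ℝ) := by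
        have hlb : ∀ x ∈ S, ((B.card : ℝ) - 1) / 2 ≤ (dMinus G B x : ℝ) := by
          intro x hx
          have := hdB x hx
          linarith
        have := Finset.card_nsmul_le_sum S (fun x => (dMinus G B x : ℝ)) _ hlb
        rwa [nsmul_eq_mul] at this
      have h2 : (S.card : ℝ) * (((B.card : ℝ) - 1) / 2) ≤ (B.card : ℝ) * (3 * η * n) :=
        le_trans h1 hsumle
      have h5 : (0 : ℝ) < (B.card : ℝ) - 1 := by linarith
      have h6 : (S.card : ℝ) / 2 ≤ 6 * η * n := by nlinarith [hηpos]
      linarith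
  refine ⟨?_, ?_, ?_, ?_⟩
  · -- part (i)
    intro heq hle d₁ d₂
    by_contra hcon
    push_neg at hcon
    have hkey : ∀ x y x' y', x ∈ S → y ∈ T → x' ∈ S → y' ∈ T → x ≠ x' →
        (if d₁ then ((x, y) : Fin n × Fin n) else (y, x)) ∈ G →
        (if d₂ then ((x', y') : Fin n × Fin n) else (y', x')) ∈ G → y = y' := by
      intro x y x' y' hx hy hx' hy' hxx h1 h2
      by_contra hyy
      refine hcon _ h1 _ h2 ?_ ?_ ?_
      · cases d₁ <;> simp [hx, hy]
      · cases d₂ <;> simp [hx', hy']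
      · have n1 : x ≠ y' := hST_ne hx hy'
        have n2 : y ≠ x' := (hST_ne hx' hy).symm
        cases d₁ <;> cases d₂ <;>
          simp only [Bool.false_eq_true, ite_true, ite_false, if_true, if_false]
        exacts [⟨hyy, n2, n1, hxx⟩, ⟨n2, hyy, hxx, n1⟩, ⟨n1, hxx, hyy, n2⟩, ⟨hxx, n1, n2, hyy⟩]
    have hedge : ∀ (d : Bool) (x : Fin n), 0 < dPlus G T x → 0 < dMinus G T x →
        ∃ y ∈ T, (if d then ((x, y) : Fin n × Fin n) else (y, x)) ∈ G := by
      intro d x h1 h2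
      cases d
      · obtain ⟨y, hy, hg⟩ := exists_in h2
        exact ⟨y, hy, by simpa using hg⟩
      · obtain ⟨y, hy, hg⟩ := exists_out h1
        exact ⟨y, hy, by simpa using hg⟩
    set good := S.filter (fun x => 0 < dPlus G T x ∧ 0 < dMinus G T x) with hgooddef
    have hgoodcard : 2 < good.card := by
      rcases Nat.eq_zero_or_pos A.card with ha0 | hapos
      · have hb0 : B.card = 0 := by omega
        have ha0R : (A.card : ℝ) = 0 := by exact_mod_cast ha0
        have hb0R : (B.card : ℝ) = 0 := by exact_mod_cast hb0
        have hall : ∀ x ∈ S, 0 < dPlus G T x ∧ 0 < dMinus G T x := by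
          intro x hx
          have h2 : (dPlus G A x : ℝ) ≤ A.card := by exact_mod_cast dPlus_le_card
          have h3 : (dPlus G B x : ℝ) ≤ B.card := by exact_mod_cast dPlus_le_card
          have h4 : (dPlus G S x : ℝ) + 1 ≤ S.card := by exact_mod_cast dPlus_add_one_le hG hx
          have h2' : (dMinus G A x : ℝ) ≤ A.card := by exact_mod_cast dMinus_le_card
          have h3' : (dMinus G B x : ℝ) ≤ B.card := by exact_mod_cast dMinus_le_card
          have h4' : (dMinus G S x : ℝ) + 1 ≤ S.card := by exact_mod_cast dMinus_add_one_le hG hx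
          have hp := hdegP x
          have hm := hdegM x
          constructor
          · have h5 : (0 : ℝ) < dPlus G T x := by linarith
            exact_mod_cast h5
          · have h5 : (0 : ℝ) < dMinus G T x := by linarith
            exact_mod_cast h5
        rw [hgooddef, filter_true_of_mem hall]
        have h6 : (2 : ℝ) < S.card := by linarith
        exact_mod_cast h6
      · have ha1' : A.card = 1 := by omega
        have hb1' : B.card = 1 := by omega
        obtain ⟨u, hu⟩ := card_eq_one.1 ha1'
        obtain ⟨w, hw⟩ := card_eq_one.1 hb1'
        have huA : u ∈ A := by rw [hu]; exact mem_singleton_self u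
        have hwB : w ∈ B := by rw [hw]; exact mem_singleton_self w
        have ha1R : (A.card : ℝ) = 1 := by exact_mod_cast ha1'
        have hb1R : (B.card : ℝ) = 1 := by exact_mod_cast hb1'
        have hsub : S.filter (fun x => ¬(0 < dPlus G T x ∧ 0 < dMinus G T x)) ⊆
            S.filter (fun y => (y, u) ∈ G) ∪ S.filter (fun y => (w, y) ∈ G) := by
          intro x hx
          rw [mem_filter] at hx
          obtain ⟨hxS, hxbad⟩ := hx
          have h3 : (dPlus G B x : ℝ) ≤ B.card := by exact_mod_cast dPlus_le_card
          have h4 : (dPlus G S x : ℝ) + 1 ≤ S.card := by exact_mod_cast dPlus_add_one_le hG hxS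
          have h2' : (dMinus G A x : ℝ) ≤ A.card := by exact_mod_cast dMinus_le_card
          have h4' : (dMinus G S x : ℝ) + 1 ≤ S.card := by exact_mod_cast dMinus_add_one_le hG hxS
          have hp := hdegP x
          have hm := hdegM x
          rw [mem_union]
          by_cases hdp : 0 < dPlus G T x
          · have hdm : dMinus G T x = 0 := by
              by_contra h0
              exact hxbad ⟨hdp, Nat.pos_of_ne_zero h0⟩
            right
            rw [mem_filter]
            refine ⟨hxS, ?_⟩
            have h0 : 0 < dMinus G B x := by
              rw [hdm] at hm
              push_cast at hm
              have h5 : (0 : ℝ) < dMinus G B x := by linarith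
              exact_mod_cast h5
            obtain ⟨y, hyB, hyx⟩ := exists_in h0
            rw [hw, mem_singleton] at hyB
            rwa [hyB] at hyx
          · have hdp0 : dPlus G T x = 0 := by omega
            left
            rw [mem_filter]
            refine ⟨hxS, ?_⟩
            have h0 : 0 < dPlus G A x := by
              rw [hdp0] at hp
              push_cast at hp
              have h5 : (0 : ℝ) < dPlus G A x := by linarith
              exact_mod_cast h5
            obtain ⟨y, hyA, hyx⟩ := exists_out h0
            rw [hu, mem_singleton] at hyA
            rwa [hyA] at hyx
        have hcbad : ((S.filter (fun x => ¬(0 < dPlus G T x ∧ 0 < dMinus G T x))).card : ℝ)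
            ≤ 6 * η * n := by
          have h5 := card_le_card hsub
          have h6 := card_union_le (S.filter (fun y => (y, u) ∈ G))
            (S.filter (fun y => (w, y) ∈ G))
          have hc1 : (S.filter (fun y => (y, u) ∈ G)).card = dMinus G S u :=
            (dMinus_eq G S u).symm
          have hc2 : (S.filter (fun y => (w, y) ∈ G)).card = dPlus G S w :=
            (dPlus_eq G S w).symm
          have h7 := (hP6 u huA).2.2.1
          have h8 := (hP7 w hwB).2.2.2
          have h9 : ((S.filter (fun x => ¬(0 < dPlus G T x ∧ 0 < dMinus G T x))).card : ℝ)
              ≤ (dMinus G S u : ℝ) + (dPlus G S w : ℝ) := by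
            rw [hc1, hc2] at h6
            have := le_trans h5 h6
            exact_mod_cast this
          linarith
        have hsplit := card_filter_add_card_filter_not
          (s := S) (p := fun x => 0 < dPlus G T x ∧ 0 < dMinus G T x)
        have hsplitR : (good.card : ℝ)
            + ((S.filter (fun x => ¬(0 < dPlus G T x ∧ 0 < dMinus G T x))).card : ℝ)
            = S.card := by
          rw [hgooddef]
          exact_mod_cast hsplit
        have h6 : (2 : ℝ) < good.card := by linarith
        exact_mod_cast h6
    obtain ⟨x₁, x₂, x₃, hx₁, hx₂, hx₃, h12, h13, h23⟩ := two_lt_card_iff.1 hgoodcard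
    have hmem : ∀ x ∈ good, x ∈ S ∧ 0 < dPlus G T x ∧ 0 < dMinus G T x := by
      intro x hx
      rw [hgooddef, mem_filter] at hx
      exact ⟨hx.1, hx.2⟩
    obtain ⟨hx₁S, hp₁, hm₁⟩ := hmem x₁ hx₁
    obtain ⟨hx₂S, hp₂, hm₂⟩ := hmem x₂ hx₂
    obtain ⟨hx₃S, hp₃, hm₃⟩ := hmem x₃ hx₃
    obtain ⟨y₁, hy₁T, he₁⟩ := hedge d₁ x₁ hp₁ hm₁
    obtain ⟨y₂, hy₂T, hf₂⟩ := hedge d₂ x₂ hp₂ hm₂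
    obtain ⟨y₃, hy₃T, hf₃⟩ := hedge d₂ x₃ hp₃ hm₃
    have hy21 : y₁ = y₂ := hkey x₁ y₁ x₂ y₂ hx₁S hy₁T hx₂S hy₂T h12 he₁ hf₂
    have hy31 : y₁ = y₃ := hkey x₁ y₁ x₃ y₃ hx₁S hy₁T hx₃S hy₃T h13 he₁ hf₃
    have hcov : ∀ x ∈ S, ∀ y ∈ T,
        (if d₁ then ((x, y) : Fin n × Fin n) else (y, x)) ∈ G → y = y₁ := by
      intro x hx y hy hxy
      by_cases hxx : x = x₂
      · exact (hkey x y x₃ y₃ hx hy hx₃S hy₃T (by rw [hxx]; exact h23) hxy hf₃).trans hy31.symm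
      · exact (hkey x y x₂ y₂ hx hy hx₂S hy₂T hxx hxy hf₂).trans hy21.symm
    clear hkey hedge he₁ hf₂ hf₃ hy21 hy31
    cases d₁ with
    | true =>
      simp only [ite_true, if_true] at hcov
      have hcS : ∀ x ∈ S, (dPlus G T x : ℝ) ≤ 1 := by
        intro x hx
        exact_mod_cast dPlus_le_one_of_cov (y := y₁) (fun z hz h => hcov x hx z hz h)
      have hdSz : ∀ z ∈ T, z ≠ y₁ → dMinus G S z = 0 := by
        intro z hz hzne
        exact dMinus_eq_zero_of (fun x hx hxz => absurd (hcov x hx z hz hxz) hzne)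
      rcases Nat.eq_zero_or_pos A.card with ha0 | hapos
      · -- a = b = 0
        have hb0 : B.card = 0 := by omega
        have ha0R : (A.card : ℝ) = 0 := by exact_mod_cast ha0
        have hb0R : (B.card : ℝ) = 0 := by exact_mod_cast hb0
        have hsge : (n : ℝ) / 2 ≤ S.card := by
          have hp := hdegP x₁
          have h2 : (dPlus G A x₁ : ℝ) ≤ A.card := by exact_mod_cast dPlus_le_card
          have h3 : (dPlus G B x₁ : ℝ) ≤ B.card := by exact_mod_cast dPlus_le_card
          have h4 : (dPlus G S x₁ : ℝ) + 1 ≤ S.card := by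
            exact_mod_cast dPlus_add_one_le hG hx₁S
          have h5 := hcS x₁ hx₁S
          linarith
        have hTcard : 1 < T.card := by
          have h5 : (1 : ℝ) < T.card := by linarith
          exact_mod_cast h5
        have hzpos : 0 < (T.erase y₁).card := by
          have e1 : T.card - 1 ≤ (T.erase y₁).card := pred_card_le_card_erase
          omega
        obtain ⟨z, hzmem⟩ := card_pos.1 hzpos
        rw [mem_erase] at hzmem
        obtain ⟨hzne, hzT⟩ := hzmem
        have hm := hdegM z
        have h2 : (dMinus G A z : ℝ) ≤ A.card := by exact_mod_cast dMinus_le_card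
        have h3 : (dMinus G B z : ℝ) ≤ B.card := by exact_mod_cast dMinus_le_card
        have h4 : dMinus G S z = 0 := hdSz z hzT hzne
        have h5 : (dMinus G T z : ℝ) + 1 ≤ T.card := by exact_mod_cast dMinus_add_one_le hG hzT
        rw [h4] at hm
        push_cast at hm
        linarith
      · -- a = b = 1
        have ha1' : A.card = 1 := by omega
        have hb1' : B.card = 1 := by omega
        obtain ⟨u, hu⟩ := card_eq_one.1 ha1'
        obtain ⟨w, hw⟩ := card_eq_one.1 hb1'
        have huA : u ∈ A := by rw [hu]; exact mem_singleton_self u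
        have hwB : w ∈ B := by rw [hw]; exact mem_singleton_self w
        have ha1R : (A.card : ℝ) = 1 := by exact_mod_cast ha1'
        have hb1R : (B.card : ℝ) = 1 := by exact_mod_cast hb1'
        have hsge : (n : ℝ) / 2 - 2 ≤ S.card := by
          have hp := hdegP x₁
          have h2 : (dPlus G A x₁ : ℝ) ≤ A.card := by exact_mod_cast dPlus_le_card
          have h3 : (dPlus G B x₁ : ℝ) ≤ B.card := by exact_mod_cast dPlus_le_card
          have h4 : (dPlus G S x₁ : ℝ) + 1 ≤ S.card := by
            exact_mod_cast dPlus_add_one_le hG hx₁S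
          have h5 := hcS x₁ hx₁S
          linarith
        -- choose z ∈ T, z ≠ y₁, (u,z) ∉ G
        have hzex : ∃ z ∈ T, z ≠ y₁ ∧ (u, z) ∉ G := by
          have hsub2 : (T.erase y₁).filter (fun z => (u, z) ∈ G) ⊆
              T.filter (fun z => (u, z) ∈ G) :=
            filter_subset_filter _ (erase_subset _ _)
          have hc3 : ((T.filter (fun z => (u, z) ∈ G)).card : ℝ) ≤ 3 * η * n := by
            rw [← dPlus_eq]
            exact (hP6 u huA).2.2.2
          have hsplit2 := card_filter_add_card_filter_not
            (s := T.erase y₁) (p := fun z => (u, z) ∈ G)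
          have he2 : T.card - 1 ≤ (T.erase y₁).card := pred_card_le_card_erase
          have hTcard : 3 * η * n + 1 < (T.card : ℝ) - 1 := by linarith
          have hcpos : 0 < ((T.erase y₁).filter (fun z => ¬(u, z) ∈ G)).card := by
            by_contra h0
            push_neg at h0
            have h00 : ((T.erase y₁).filter (fun z => ¬(u, z) ∈ G)).card = 0 := by omega
            rw [h00, Nat.add_zero] at hsplit2
            have hle2 := card_le_card hsub2
            have : (((T.erase y₁).card : ℝ)) ≤ 3 * η * n := by
              rw [← hsplit2]
              exact le_trans (by exact_mod_cast hle2) hc3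
            have : ((T.card : ℝ)) - 1 ≤ 3 * η * n := by
              have he2R : ((T.card : ℝ)) - 1 ≤ ((T.erase y₁).card : ℝ) := by
                have : ((T.card - 1 : ℕ) : ℝ) ≤ ((T.erase y₁).card : ℝ) := by exact_mod_cast he2
                have hT1 : 1 ≤ T.card := by
                  have : (1:ℝ) ≤ T.card := by linarith
                  exact_mod_cast this
                rw [Nat.cast_sub hT1] at this
                exact_mod_cast this
              linarith
            linarith
          obtain ⟨z, hzmem⟩ := card_pos.1 hcpos
          rw [mem_filter, mem_erase] at hzmem
          exact ⟨z, hzmem.1.2, hzmem.1.1, hzmem.2⟩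
        obtain ⟨z, hzT, hzne, hzu⟩ := hzex
        have htge : (n : ℝ) / 2 ≤ T.card := by
          have hm := hdegM z
          have h2 : dMinus G A z = 0 := by
            apply dMinus_eq_zero_of
            intro y hy
            rw [hu, mem_singleton] at hy
            rw [hy]
            exact hzu
          have h3 : (dMinus G B z : ℝ) ≤ B.card := by exact_mod_cast dMinus_le_card
          have h4 : dMinus G S z = 0 := hdSz z hzT hzne
          have h5 : (dMinus G T z : ℝ) + 1 ≤ T.card := by exact_mod_cast dMinus_add_one_le hG hzT
          rw [h2, h4] at hm
          push_cast at hm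
          linarith
        have hAx : ∀ x ∈ S, (x, u) ∈ G := by
          intro x hx
          have hp := hdegP x
          have h3 : (dPlus G B x : ℝ) ≤ B.card := by exact_mod_cast dPlus_le_card
          have h4 : (dPlus G S x : ℝ) + 1 ≤ S.card := by exact_mod_cast dPlus_add_one_le hG hx
          have h5 := hcS x hx
          have hsle : (S.card : ℝ) ≤ (n : ℝ) / 2 - 2 := by linarith
          have h0 : 0 < dPlus G A x := by
            have h6 : (0 : ℝ) < dPlus G A x := by linarith
            exact_mod_cast h6
          obtain ⟨y, hyA, hyx⟩ := exists_out h0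
          rw [hu, mem_singleton] at hyA
          rwa [hyA] at hyx
        have hfinal : (S.card : ℝ) ≤ (dMinus G S u : ℝ) := by
          have h6 : S.filter (fun y => (y, u) ∈ G) = S := filter_true_of_mem hAx
          rw [dMinus_eq, h6]
        have h7 := (hP6 u huA).2.2.1
        linarith
    | false =>
      simp only [Bool.false_eq_true, ite_false, if_false] at hcov
      have hcS : ∀ x ∈ S, (dMinus G T x : ℝ) ≤ 1 := by
        intro x hx
        exact_mod_cast dMinus_le_one_of_cov (y := y₁) (fun z hz h => hcov x hx z hz h)
      have hdSz : ∀ z ∈ T, z ≠ y₁ → dPlus G S z = 0 := by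
        intro z hz hzne
        exact dPlus_eq_zero_of (fun x hx hxz => absurd (hcov x hx z hz hxz) hzne)
      rcases Nat.eq_zero_or_pos A.card with ha0 | hapos
      · -- a = b = 0
        have hb0 : B.card = 0 := by omega
        have ha0R : (A.card : ℝ) = 0 := by exact_mod_cast ha0
        have hb0R : (B.card : ℝ) = 0 := by exact_mod_cast hb0
        have hsge : (n : ℝ) / 2 ≤ S.card := by
          have hm := hdegM x₁
          have h2 : (dMinus G A x₁ : ℝ) ≤ A.card := by exact_mod_cast dMinus_le_card
          have h3 : (dMinus G B x₁ : ℝ) ≤ B.card := by exact_mod_cast dMinus_le_card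
          have h4 : (dMinus G S x₁ : ℝ) + 1 ≤ S.card := by
            exact_mod_cast dMinus_add_one_le hG hx₁S
          have h5 := hcS x₁ hx₁S
          linarith
        have hTcard : 1 < T.card := by
          have h5 : (1 : ℝ) < T.card := by linarith
          exact_mod_cast h5
        have hzpos : 0 < (T.erase y₁).card := by
          have e1 : T.card - 1 ≤ (T.erase y₁).card := pred_card_le_card_erase
          omega
        obtain ⟨z, hzmem⟩ := card_pos.1 hzpos
        rw [mem_erase] at hzmem
        obtain ⟨hzne, hzT⟩ := hzmem
        have hp := hdegP z
        have h2 : (dPlus G A z : ℝ) ≤ A.card := by exact_mod_cast dPlus_le_card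
        have h3 : (dPlus G B z : ℝ) ≤ B.card := by exact_mod_cast dPlus_le_card
        have h4 : dPlus G S z = 0 := hdSz z hzT hzne
        have h5 : (dPlus G T z : ℝ) + 1 ≤ T.card := by exact_mod_cast dPlus_add_one_le hG hzT
        rw [h4] at hp
        push_cast at hp
        linarith
      · -- a = b = 1
        have ha1' : A.card = 1 := by omega
        have hb1' : B.card = 1 := by omega
        obtain ⟨u, hu⟩ := card_eq_one.1 ha1'
        obtain ⟨w, hw⟩ := card_eq_one.1 hb1'
        have huA : u ∈ A := by rw [hu]; exact mem_singleton_self u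
        have hwB : w ∈ B := by rw [hw]; exact mem_singleton_self w
        have ha1R : (A.card : ℝ) = 1 := by exact_mod_cast ha1'
        have hb1R : (B.card : ℝ) = 1 := by exact_mod_cast hb1'
        have hsge : (n : ℝ) / 2 - 2 ≤ S.card := by
          have hm := hdegM x₁
          have h2 : (dMinus G A x₁ : ℝ) ≤ A.card := by exact_mod_cast dMinus_le_card
          have h3 : (dMinus G B x₁ : ℝ) ≤ B.card := by exact_mod_cast dMinus_le_card
          have h4 : (dMinus G S x₁ : ℝ) + 1 ≤ S.card := by
            exact_mod_cast dMinus_add_one_le hG hx₁S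
          have h5 := hcS x₁ hx₁S
          linarith
        -- choose z ∈ T, z ≠ y₁, (z,w) ∉ G
        have hzex : ∃ z ∈ T, z ≠ y₁ ∧ (z, w) ∉ G := by
          have hsub2 : (T.erase y₁).filter (fun z => (z, w) ∈ G) ⊆
              T.filter (fun z => (z, w) ∈ G) :=
            filter_subset_filter _ (erase_subset _ _)
          have hc3 : ((T.filter (fun z => (z, w) ∈ G)).card : ℝ) ≤ 3 * η * n := by
            rw [← dMinus_eq]
            exact (hP7 w hwB).2.2.1
          have hsplit2 := card_filter_add_card_filter_not
            (s := T.erase y₁) (p := fun z => (z, w) ∈ G)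
          have he2 : T.card - 1 ≤ (T.erase y₁).card := pred_card_le_card_erase
          have hTcard : 3 * η * n + 1 < (T.card : ℝ) - 1 := by linarith
          have hcpos : 0 < ((T.erase y₁).filter (fun z => ¬(z, w) ∈ G)).card := by
            by_contra h0
            push_neg at h0
            have h00 : ((T.erase y₁).filter (fun z => ¬(z, w) ∈ G)).card = 0 := by omega
            rw [h00, Nat.add_zero] at hsplit2
            have hle2 := card_le_card hsub2
            have : (((T.erase y₁).card : ℝ)) ≤ 3 * η * n := by
              rw [← hsplit2]
              exact le_trans (by exact_mod_cast hle2) hc3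
            have : ((T.card : ℝ)) - 1 ≤ 3 * η * n := by
              have he2R : ((T.card : ℝ)) - 1 ≤ ((T.erase y₁).card : ℝ) := by
                have h9 : ((T.card - 1 : ℕ) : ℝ) ≤ ((T.erase y₁).card : ℝ) := by
                  exact_mod_cast he2
                have hT1 : 1 ≤ T.card := by
                  have : (1:ℝ) ≤ T.card := by linarith
                  exact_mod_cast this
                rw [Nat.cast_sub hT1] at h9
                exact_mod_cast h9
              linarith
            linarith
          obtain ⟨z, hzmem⟩ := card_pos.1 hcpos
          rw [mem_filter, mem_erase] at hzmem
          exact ⟨z, hzmem.1.2, hzmem.1.1, hzmem.2⟩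
        obtain ⟨z, hzT, hzne, hzw⟩ := hzex
        have htge : (n : ℝ) / 2 ≤ T.card := by
          have hp := hdegP z
          have h2 : dPlus G B z = 0 := by
            apply dPlus_eq_zero_of
            intro y hy
            rw [hw, mem_singleton] at hy
            rw [hy]
            exact hzw
          have h3 : (dPlus G A z : ℝ) ≤ A.card := by exact_mod_cast dPlus_le_card
          have h4 : dPlus G S z = 0 := hdSz z hzT hzne
          have h5 : (dPlus G T z : ℝ) + 1 ≤ T.card := by exact_mod_cast dPlus_add_one_le hG hzT
          rw [h2, h4] at hp
          push_cast at hp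
          linarith
        have hBx : ∀ x ∈ S, (w, x) ∈ G := by
          intro x hx
          have hm := hdegM x
          have h2 : (dMinus G A x : ℝ) ≤ A.card := by exact_mod_cast dMinus_le_card
          have h4 : (dMinus G S x : ℝ) + 1 ≤ S.card := by exact_mod_cast dMinus_add_one_le hG hx
          have h5 := hcS x hx
          have hsle : (S.card : ℝ) ≤ (n : ℝ) / 2 - 2 := by linarith
          have h0 : 0 < dMinus G B x := by
            have h6 : (0 : ℝ) < dMinus G B x := by linarith
            exact_mod_cast h6
          obtain ⟨y, hyB, hyx⟩ := exists_in h0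
          rw [hw, mem_singleton] at hyB
          rwa [hyB] at hyx
        have hfinal : (S.card : ℝ) ≤ (dPlus G S w : ℝ) := by
          have h6 : S.filter (fun y => (w, y) ∈ G) = S := filter_true_of_mem hBx
          rw [dPlus_eq, h6]
        have h7 := (hP7 w hwB).2.2.2
        linarith
  · -- part (ii)
    intro hA
    exact main23 (by rw [hA]; simp) (Or.inl (by rw [hA]; simp))
  · -- part (iii)
    intro ha1 hb2
    exact main23 (by omega) (Or.inr hb2)
  · -- part (iv)
    by_contra hcon
    push_neg at hcon
    have hTA_SB : ∀ ⦃y⦄, y ∈ T ∪ A → ∀ ⦃w⦄, w ∈ S ∪ B → y ≠ w := by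
      intro y hy w hw hyw
      rcases mem_union.1 hy with h1 | h1 <;> rcases mem_union.1 hw with h2 | h2
      · exact hST_ne h2 h1 hyw.symm
      · exact (disjoint_left.mp dBT h2) (hyw ▸ h1)
      · exact (disjoint_left.mp dAS h1) (hyw ▸ h2)
      · exact (disjoint_left.mp dAB h1) (hyw ▸ h2)
    have hS_TA : ∀ ⦃x⦄, x ∈ S → ∀ ⦃y⦄, y ∈ T ∪ A → x ≠ y := by
      intro x hx y hy hxy
      rcases mem_union.1 hy with h1 | h1
      · exact hST_ne hx h1 hxy
      · exact (disjoint_left.mp dAS h1) (hxy ▸ hx)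
    have hT_SB : ∀ ⦃z⦄, z ∈ T → ∀ ⦃w⦄, w ∈ S ∪ B → z ≠ w := by
      intro z hz w hw hzw
      rcases mem_union.1 hw with h1 | h1
      · exact hST_ne h1 hz hzw.symm
      · exact (disjoint_left.mp dBT h1) (hzw ▸ hz)
    have hdS : ∀ x ∈ S, (n : ℝ) / 2 - S.card + 1 - B.card ≤ (dPlus G (T ∪ A) x : ℝ) := by
      intro x hx
      have h1 := hdegP x
      have h2 : dPlus G S x + 1 ≤ S.card := dPlus_add_one_le hG hx
      have h2R : (dPlus G S x : ℝ) + 1 ≤ S.card := by exact_mod_cast h2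
      have h3 : (dPlus G B x : ℝ) ≤ B.card := by exact_mod_cast dPlus_le_card
      have h4 : dPlus G (T ∪ A) x = dPlus G T x + dPlus G A x := dPlus_union dAT.symm
      have h4R : (dPlus G (T ∪ A) x : ℝ) = dPlus G T x + dPlus G A x := by
        rw [h4]; push_cast; ring
      linarith
    have hdT : ∀ z ∈ T, (n : ℝ) / 2 - T.card + 1 - A.card ≤ (dPlus G (S ∪ B) z : ℝ) := by
      intro z hz
      have h1 := hdegP z
      have h2 : dPlus G T z + 1 ≤ T.card := dPlus_add_one_le hG hz
      have h2R : (dPlus G T z : ℝ) + 1 ≤ T.card := by exact_mod_cast h2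
      have h3 : (dPlus G A z : ℝ) ≤ A.card := by exact_mod_cast dPlus_le_card
      have h4 : dPlus G (S ∪ B) z = dPlus G S z + dPlus G B z := dPlus_union dBS.symm
      have h4R : (dPlus G (S ∪ B) z : ℝ) = dPlus G S z + dPlus G B z := by
        rw [h4]; push_cast; ring
      linarith
    rcases le_or_gt ((S.card : ℝ) + B.card) ((n : ℝ) / 2) with h1 | h1
    · rcases le_or_gt ((T.card : ℝ) + A.card) ((n : ℝ) / 2) with h2 | h2
      · -- both small: every S-vertex and T-vertex has an out-edge
        have hS1 : ∀ x ∈ S, 0 < dPlus G (T ∪ A) x := by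
          intro x hx
          have h := hdS x hx
          have h' : (0 : ℝ) < (dPlus G (T ∪ A) x : ℝ) := by linarith
          exact_mod_cast h'
        have hT1 : ∀ z ∈ T, 0 < dPlus G (S ∪ B) z := by
          intro z hz
          have h := hdT z hz
          have h' : (0 : ℝ) < (dPlus G (S ∪ B) z : ℝ) := by linarith
          exact_mod_cast h'
        -- two distinct vertices in S
        have hScard2 : 1 < S.card := by
          have : (1 : ℝ) < S.card := by linarith
          exact_mod_cast this
        obtain ⟨x₁, hx₁, x₂, hx₂, hx12⟩ := one_lt_card.1 hScard2
        obtain ⟨y₁, hy₁, he₁⟩ := exists_out (hS1 x₁ hx₁)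
        obtain ⟨y₂, hy₂, he₂⟩ := exists_out (hS1 x₂ hx₂)
        -- pick z in T distinct from y₁ y₂
        have hz : ∃ z ∈ T, z ≠ y₁ ∧ z ≠ y₂ := by
          have hc : 2 < T.card := by
            have : (2 : ℝ) < T.card := by linarith
            exact_mod_cast this
          have : 0 < ((T.erase y₁).erase y₂).card := by
            have e1 : T.card - 1 ≤ (T.erase y₁).card := pred_card_le_card_erase
            have e2 : (T.erase y₁).card - 1 ≤ ((T.erase y₁).erase y₂).card :=
              pred_card_le_card_erase
            omega
          obtain ⟨z, hzmem⟩ := card_pos.1 this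
          simp only [mem_erase] at hzmem
          exact ⟨z, hzmem.2.2, hzmem.2.1, hzmem.1⟩
        obtain ⟨z, hzT, hzy₁, hzy₂⟩ := hz
        obtain ⟨w, hw, hew⟩ := exists_out (hT1 z hzT)
        by_cases hwx : w = x₁
        · exact hcon (x₂, y₂) he₂ (z, w) hew (Or.inl ⟨hx₂, hy₂⟩) (Or.inr ⟨hzT, hw⟩)
            ⟨hST_ne hx₂ hzT, fun h => hx12 (hwx ▸ h).symm, hzy₂.symm, hTA_SB hy₂ hw⟩
        · exact hcon (x₁, y₁) he₁ (z, w) hew (Or.inl ⟨hx₁, hy₁⟩) (Or.inr ⟨hzT, hw⟩)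
            ⟨hST_ne hx₁ hzT, fun h => hwx h.symm, hzy₁.symm, hTA_SB hy₁ hw⟩
      · -- t + a > n/2 : every x in S has ≥ 2 outneighbours in T ∪ A
        have hS2 : ∀ x ∈ S, 2 ≤ dPlus G (T ∪ A) x := by
          intro x hx
          have h := hdS x hx
          have h' : (1 : ℝ) < (dPlus G (T ∪ A) x : ℝ) := by linarith
          have h'' : 1 < dPlus G (T ∪ A) x := by exact_mod_cast h'
          omega
        have hScard2 : 1 < S.card := by
          have : (1 : ℝ) < S.card := by linarith
          exact_mod_cast this
        obtain ⟨x₁, hx₁, x₂, hx₂, hx12⟩ := one_lt_card.1 hScard2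
        obtain ⟨y₁, hy₁, he₁⟩ := exists_out (by have := hS2 x₁ hx₁; omega : 0 < dPlus G (T ∪ A) x₁)
        obtain ⟨y₂, hy₂, hy21, he₂⟩ := exists_out_ne (hS2 x₂ hx₂) y₁
        exact hcon (x₁, y₁) he₁ (x₂, y₂) he₂ (Or.inl ⟨hx₁, hy₁⟩) (Or.inl ⟨hx₂, hy₂⟩)
          ⟨hx12, hS_TA hx₁ hy₂, (hS_TA hx₂ hy₁).symm, fun h => hy21 h.symm⟩
    · -- s + b > n/2 : every z in T has ≥ 2 outneighbours in S ∪ B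
      have hT2 : ∀ z ∈ T, 2 ≤ dPlus G (S ∪ B) z := by
        intro z hz
        have h := hdT z hz
        have h' : (1 : ℝ) < (dPlus G (S ∪ B) z : ℝ) := by linarith
        have h'' : 1 < dPlus G (S ∪ B) z := by exact_mod_cast h'
        omega
      have hTcard2 : 1 < T.card := by
        have : (1 : ℝ) < T.card := by linarith
        exact_mod_cast this
      obtain ⟨z₁, hz₁, z₂, hz₂, hz12⟩ := one_lt_card.1 hTcard2
      obtain ⟨w₁, hw₁, hew₁⟩ := exists_out (by have := hT2 z₁ hz₁; omega : 0 < dPlus G (S ∪ B) z₁)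
      obtain ⟨w₂, hw₂, hw21, hew₂⟩ := exists_out_ne (hT2 z₂ hz₂) w₁
      exact hcon (z₁, w₁) hew₁ (z₂, w₂) hew₂ (Or.inr ⟨hz₁, hw₁⟩) (Or.inr ⟨hz₂, hw₂⟩)
        ⟨hz12, hT_SB hz₁ hw₂, (hT_SB hz₂ hw₁).symm, fun h => hw21 h.symm⟩
end
end
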